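/- Let (M, m) be a maximally reductive pair and A ⊆ H. Suppose m ∈ A ∩ M, a ∈ A ∖ M, σ(a) ∈ M ∖ A, σ(m) ∉ A ∪ M, and |a| − cut(A) > 0. Then (A ∪ M, m) is a reductive pair or ((H ∖ A) ∩ M, σ(a)) is a reductive pair; that is, |m| − cut(A ∪ M) > 0 or |a| − cut((H ∖ A) ∩ M) > 0. -/

import Mathlib

open Finset

/-- `cut d A = ∑_{x ∈ A} ∑_{y ∉ A} d x y`, the total weight of pairs
separated by the partition `{A, H ∖ A}`. -/
def cut {H : Type*} [Fintype H] [DecidableEq H] {Λ : Type*}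
    [AddCommGroup Λ] [LinearOrder Λ] [IsOrderedAddMonoid Λ] (d : H → H → Λ) (A : Finset H) : Λ :=
  ∑ x ∈ A, ∑ y ∈ Aᶜ, d x y

/-- `(X, x)` is a reductive pair if `x ∈ X`, `σ x ∉ X` and `|x| - cut X > 0`,
where `|x| = cut {x}`. -/
def IsReductivePair {H : Type*} [Fintype H] [DecidableEq H] {Λ : Type*}
    [AddCommGroup Λ] [LinearOrder Λ] [IsOrderedAddMonoid Λ] (d : H → H → Λ) (σ : H → H)
    (X : Finset H) (x : H) : Prop :=
  x ∈ X ∧ σ x ∉ X ∧ 0 < cut d {x} - cut d X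

/-- `X` is a side of a reductive ideal edge if some `x` with `x` and `σ x` on
opposite sides of the partition `{X, H ∖ X}` satisfies `|x| - cut X > 0`. -/
def IsSideOfReductiveIdealEdge {H : Type*} [Fintype H] [DecidableEq H] {Λ : Type*}
    [AddCommGroup Λ] [LinearOrder Λ] [IsOrderedAddMonoid Λ] (d : H → H → Λ) (σ : H → H)
    (X : Finset H) : Prop :=
  ∃ x : H, ((x ∈ X ∧ σ x ∉ X) ∨ (x ∉ X ∧ σ x ∈ X)) ∧ 0 < cut d {x} - cut d X

/-- `(M, m)` is maximally reductive: it is a reductive pair whose reduction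
`|m| - cut M` is at least that of any reductive pair. -/
def IsMaximallyReductivePair {H : Type*} [Fintype H] [DecidableEq H] {Λ : Type*}
    [AddCommGroup Λ] [LinearOrder Λ] [IsOrderedAddMonoid Λ] (d : H → H → Λ) (σ : H → H)
    (M : Finset H) (m : H) : Prop :=
  IsReductivePair d σ M m ∧
    ∀ X x, IsReductivePair d σ X x → cut d {x} - cut d X ≤ cut d {m} - cut d M

/-!
If both conclusions failed, `|m| ≤ cut (A ∪ M)` and `|a| ≤ cut (M \ A)`. Submodularity
`cut (A ∩ M) + cut (A ∪ M) ≤ cut A + cut M` and posimodularity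
`cut (A \ M) + cut (M \ A) ≤ cut A + cut M` of the cut function then give
`(|m| - cut (A ∩ M)) + (|a| - cut (A \ M)) ≥ 2 (|a| - cut A) + 2 (|m| - cut M)`.
But `(A ∩ M, m)` and `(A \ M, a)` separate their point from its image under `σ`, so by
maximality of `(M, m)` each of these two reductions is at most `|m| - cut M`, while
`|a| - cut A > 0`.
-/

section Cut

variable {H : Type*} [Fintype H] [DecidableEq H] {Λ : Type*}
  [AddCommGroup Λ] [LinearOrder Λ] [IsOrderedAddMonoid Λ] (d : H → H → Λ)

theorem cut_eq_sum_ite (A : Finset H) :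
    cut d A = ∑ x, ∑ y, if x ∈ A ∧ y ∉ A then d x y else 0 := by
  simp only [cut, ite_and, Finset.sum_ite_irrel, Finset.sum_const_zero]
  rw [← Finset.sum_filter, Finset.filter_mem_eq_inter, Finset.univ_inter]
  refine Finset.sum_congr rfl fun x _ => ?_
  rw [← Finset.sum_filter, Finset.filter_not, Finset.filter_mem_eq_inter, Finset.univ_inter,
    Finset.compl_eq_univ_sdiff]

theorem cut_compl (hsymm : ∀ x y, d x y = d y x) (A : Finset H) : cut d Aᶜ = cut d A := by
  rw [cut, compl_compl, Finset.sum_comm]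
  simp only [cut, hsymm]

theorem cut_inter_add_cut_union_le (hnonneg : ∀ x y, 0 ≤ d x y) (A B : Finset H) :
    cut d (A ∩ B) + cut d (A ∪ B) ≤ cut d A + cut d B := by
  simp only [cut_eq_sum_ite, ← Finset.sum_add_distrib]
  refine Finset.sum_le_sum fun x _ => Finset.sum_le_sum fun y _ => ?_
  have hxy := hnonneg x y
  simp only [Finset.mem_inter, Finset.mem_union]
  by_cases x ∈ A <;> by_cases x ∈ B <;> by_cases y ∈ A <;> by_cases y ∈ B <;> simp [*]

theorem cut_sdiff_add_cut_sdiff_le (hsymm : ∀ x y, d x y = d y x) (hnonneg : ∀ x y, 0 ≤ d x y)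
    (A B : Finset H) : cut d (A \ B) + cut d (B \ A) ≤ cut d A + cut d B := by
  have hunion : A ∪ Bᶜ = (B \ A)ᶜ := by rw [compl_sdiff, himp_eq]; rfl
  have := cut_inter_add_cut_union_le d hnonneg A Bᶜ
  rwa [← Finset.sdiff_eq_inter_compl, hunion, cut_compl d hsymm, cut_compl d hsymm] at this

end Cut

section Reductive

variable {H : Type*} [Fintype H] [DecidableEq H] {Λ : Type*}
  [AddCommGroup Λ] [LinearOrder Λ] [IsOrderedAddMonoid Λ] {d : H → H → Λ} {σ : H → H}
  {M : Finset H} {m : H}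

theorem IsMaximallyReductivePair.reduction_le (hM : IsMaximallyReductivePair d σ M m)
    {X : Finset H} {x : H} (hx : x ∈ X) (hσx : σ x ∉ X) :
    cut d {x} - cut d X ≤ cut d {m} - cut d M := by
  by_cases hpos : 0 < cut d {x} - cut d X
  · exact hM.2 X x ⟨hx, hσx, hpos⟩
  · exact (not_lt.mp hpos).trans hM.1.2.2.le

theorem IsMaximallyReductivePair.reduction_union_pos_or_sdiff_pos
    (hsymm : ∀ x y, d x y = d y x) (hnonneg : ∀ x y, 0 ≤ d x y)
    (hM : IsMaximallyReductivePair d σ M m) {A : Finset H} {a : H} (hmA : m ∈ A)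
    (haA : a ∈ A \ M) (hσa : σ a ∉ A) (ha : 0 < cut d {a} - cut d A) :
    0 < cut d {m} - cut d (A ∪ M) ∨ 0 < cut d {a} - cut d (M \ A) := by
  by_contra! hcon
  have hP := hM.reduction_le (Finset.mem_inter.mpr ⟨hmA, hM.1.1⟩)
    fun h => hM.1.2.1 (Finset.mem_inter.mp h).2
  have hQ := hM.reduction_le haA fun h => hσa (Finset.mem_sdiff.mp h).1
  have hsub := cut_inter_add_cut_union_le d hnonneg A M
  have hposi := cut_sdiff_add_cut_sdiff_le d hsymm hnonneg A M
  have hMpos := hM.1.2.2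
  grind

end Reductive

theorem key_lemma_case_four_sectors_general {H : Type*} [Fintype H] [DecidableEq H] {Λ : Type*}
    [AddCommGroup Λ] [LinearOrder Λ] [IsOrderedAddMonoid Λ] (d : H → H → Λ)
    (hsymm : ∀ x y, d x y = d y x) (hnonneg : ∀ x y, 0 ≤ d x y)
    (σ : H → H) (hinv : ∀ x, σ (σ x) = x)
    (hσnorm : ∀ x, cut d {σ x} = cut d {x})
    (M : Finset H) (m : H) (hMm : IsMaximallyReductivePair d σ M m)
    (A : Finset H) (a : H)
    (hmAM : m ∈ A ∩ M) (haA : a ∈ A \ M) (hsa : σ a ∈ M \ A) (hsm : σ m ∉ A ∪ M)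
    (ha : 0 < cut d {a} - cut d A) :
    (IsReductivePair d σ (A ∪ M) m ∧ 0 < cut d {m} - cut d (A ∪ M)) ∨
      (IsReductivePair d σ (Aᶜ ∩ M) (σ a) ∧ 0 < cut d {a} - cut d (Aᶜ ∩ M)) := by
  have hmA := (Finset.mem_inter.mp hmAM).1
  have hσa : σ (σ a) ∉ M \ A := by
    rw [hinv]
    exact fun h => (Finset.mem_sdiff.mp h).2 (Finset.mem_sdiff.mp haA).1
  rw [Finset.inter_comm, ← Finset.sdiff_eq_inter_compl]
  rcases hMm.reduction_union_pos_or_sdiff_pos hsymm hnonneg hmA haA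
    (Finset.mem_sdiff.mp hsa).2 ha with h | h
  · exact Or.inl ⟨⟨Finset.mem_union_left M hmA, hsm, h⟩, h⟩
  · exact Or.inr ⟨⟨hsa, hσa, by rwa [hσnorm]⟩, h⟩

/-- Case of the Key Lemma (all four sectors occupied): if `m ∈ A ∩ M`,
`a ∈ A ∖ M`, `σ a ∈ M ∖ A`, `σ m ∉ A ∪ M` and `|a| - cut A > 0`, then
`(A ∪ M, m)` is a reductive pair or `((H ∖ A) ∩ M, σ a)` is a reductive pair;
that is, `|m| - cut (A ∪ M) > 0` or `|a| - cut ((H ∖ A) ∩ M) > 0`. -/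
theorem key_lemma_case_four_sectors {H : Type*} [Fintype H] [DecidableEq H] {Λ : Type*}
    [AddCommGroup Λ] [LinearOrder Λ] [IsOrderedAddMonoid Λ] (d : H → H → Λ)
    (hsymm : ∀ x y, d x y = d y x) (hnonneg : ∀ x y, 0 ≤ d x y)
    (σ : H → H) (hinv : ∀ x, σ (σ x) = x) (hfix : ∀ x, σ x ≠ x)
    (hσnorm : ∀ x, cut d {σ x} = cut d {x})
    (M : Finset H) (m : H) (hMm : IsMaximallyReductivePair d σ M m)
    (A : Finset H) (a : H)
    (hmAM : m ∈ A ∩ M) (haA : a ∈ A \ M) (hsa : σ a ∈ M \ A) (hsm : σ m ∉ A ∪ M)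
    (ha : 0 < cut d {a} - cut d A) :
    (IsReductivePair d σ (A ∪ M) m ∧ 0 < cut d {m} - cut d (A ∪ M)) ∨
      (IsReductivePair d σ (Aᶜ ∩ M) (σ a) ∧ 0 < cut d {a} - cut d (Aᶜ ∩ M)) :=
  key_lemma_case_four_sectors_general d hsymm hnonneg σ hinv hσnorm M m hMm A a hmAM haA hsa hsm ha
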